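/- arXiv:cs/0506090 — 4 statements merged into one kernel-verified Lean document; each statement's English description precedes it below -/
import Mathlib

section
/- Let P = (D₁, D₂, D₃, R) be a partition of the vertex set of a graph G, and suppose v is a critical vertex for P, meaning the number of open neighbors of v (vertices in N[v] ∩ R) equals the number of open sets of v (indices i with v ∉ N[Dᵢ]) and this number is positive. Then in any extension of P to a partition of V into three dominating sets D₁' ⊇ D₁, D₂' ⊇ D₂, D₃' ⊇ D₃, the vertices of N[v] ∩ R are assigned to pairwise distinct sets among those Dᵢ' with v ∉ N[Dᵢ]. -/
open Finset

/-- The closed neighborhood of a finite set of vertices. -/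
def closedNbhd {V : Type*} [Fintype V] [DecidableEq V] (G : SimpleGraph V)
    [DecidableRel G.Adj] (S : Finset V) : Finset V :=
  S ∪ S.biUnion (fun v => G.neighborFinset v)

lemma mem_closedNbhd {V : Type*} [Fintype V] [DecidableEq V] (G : SimpleGraph V)
    [DecidableRel G.Adj] (S : Finset V) (x : V) :
    x ∈ closedNbhd G S ↔ x ∈ S ∨ ∃ w ∈ S, G.Adj w x := by
  simp [closedNbhd, Finset.mem_union, Finset.mem_biUnion]

theorem critical_vertex_distinct_assignment {V : Type*} [Fintype V] [DecidableEq V]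
    (G : SimpleGraph V) [DecidableRel G.Adj]
    (D : Fin 3 → Finset V) (R : Finset V)
    (hdisj : ∀ i j : Fin 3, i ≠ j → Disjoint (D i) (D j))
    (hdisjR : ∀ i : Fin 3, Disjoint (D i) R)
    (hcover : (D 0 ∪ D 1 ∪ D 2) ∪ R = Finset.univ)
    (v : V)
    -- v is critical: #(open neighbors) = #(open sets) > 0
    (hcrit : ((insert v (G.neighborFinset v)) ∩ R).card
        = (Finset.univ.filter fun i : Fin 3 => v ∉ closedNbhd G (D i)).card)
    (hpos : 0 < (Finset.univ.filter fun i : Fin 3 => v ∉ closedNbhd G (D i)).card)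
    -- an extension to a partition into three dominating sets
    (D' : Fin 3 → Finset V)
    (hext : ∀ i : Fin 3, D i ⊆ D' i)
    (hdisj' : ∀ i j : Fin 3, i ≠ j → Disjoint (D' i) (D' j))
    (hcover' : D' 0 ∪ D' 1 ∪ D' 2 = Finset.univ)
    (hdom' : ∀ i : Fin 3, closedNbhd G (D' i) = Finset.univ) :
    -- each vertex of N[v] ∩ R lands in a set that was open for v,
    (∀ u ∈ (insert v (G.neighborFinset v)) ∩ R, ∀ i : Fin 3,
        u ∈ D' i → v ∉ closedNbhd G (D i)) ∧
    -- and distinct vertices of N[v] ∩ R land in distinct sets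
    (∀ u₁ ∈ (insert v (G.neighborFinset v)) ∩ R,
      ∀ u₂ ∈ (insert v (G.neighborFinset v)) ∩ R,
        ∀ i : Fin 3, u₁ ∈ D' i → u₂ ∈ D' i → u₁ = u₂) := by
  classical
  set N : Finset V := (insert v (G.neighborFinset v)) ∩ R with hN
  set O : Finset (Fin 3) :=
    Finset.univ.filter (fun i : Fin 3 => v ∉ closedNbhd G (D i)) with hO
  -- vertices of D' i not in D i belong to R
  have hnew : ∀ i : Fin 3, ∀ u, u ∈ D' i → u ∉ D i → u ∈ R := by
    intro i u hu hnu
    have hcov : u ∈ (D 0 ∪ D 1 ∪ D 2) ∪ R := by rw [hcover]; exact mem_univ u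
    have hDj : ∀ j : Fin 3, u ∈ D j → False := by
      intro j hj
      by_cases hij : i = j
      · exact hnu (hij ▸ hj)
      · exact Finset.disjoint_left.mp (hdisj' i j hij) hu (hext j hj)
    simp only [Finset.mem_union] at hcov
    rcases hcov with ((h | h) | h) | h
    · exact absurd h (hDj 0)
    · exact absurd h (hDj 1)
    · exact absurd h (hDj 2)
    · exact h
  -- Step A: each open index has a witness in N assigned to it
  have hA : ∀ i ∈ O, ∃ u ∈ N, u ∈ D' i := by
    intro i hi
    rw [hO, Finset.mem_filter] at hi
    have hiopen := hi.2
    have hv' : v ∈ closedNbhd G (D' i) := by rw [hdom']; exact mem_univ v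
    rw [mem_closedNbhd] at hv'
    rcases hv' with hv' | ⟨w, hw, hadj⟩
    · -- v itself is in D' i
      have hvnD : v ∉ D i := fun h => hiopen ((mem_closedNbhd G (D i) v).mpr (Or.inl h))
      have hvR : v ∈ R := hnew i v hv' hvnD
      exact ⟨v, by simp [hN, hvR], hv'⟩
    · -- a neighbor w of v is in D' i
      have hwnD : w ∉ D i := fun h =>
        hiopen ((mem_closedNbhd G (D i) v).mpr (Or.inr ⟨w, h, hadj⟩))
      have hwR : w ∈ R := hnew i w hw hwnD
      refine ⟨w, ?_, hw⟩
      simp only [hN, Finset.mem_inter, Finset.mem_insert, SimpleGraph.mem_neighborFinset]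
      exact ⟨Or.inr hadj.symm, hwR⟩
  -- witness function
  let T : Fin 3 → V := fun i => if h : i ∈ O then (hA i h).choose else v
  have hTN : ∀ i ∈ O, T i ∈ N := by
    intro i hi; simp only [T, dif_pos hi]; exact (hA i hi).choose_spec.1
  have hTD : ∀ i ∈ O, T i ∈ D' i := by
    intro i hi; simp only [T, dif_pos hi]; exact (hA i hi).choose_spec.2
  have hTinj : ∀ i₁ ∈ O, ∀ i₂ ∈ O, T i₁ = T i₂ → i₁ = i₂ := by
    intro i₁ h₁ i₂ h₂ he
    by_contra hne
    exact Finset.disjoint_left.mp (hdisj' i₁ i₂ hne) (hTD i₁ h₁) (he ▸ hTD i₂ h₂)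
  -- surjectivity onto N
  have hsurj : ∀ u ∈ N, ∃ i ∈ O, T i = u := by
    have hcard : N.card ≤ O.card := le_of_eq hcrit
    have := Finset.surj_on_of_inj_on_of_card_le (fun i (_ : i ∈ O) => T i)
      (fun i hi => hTN i hi) (fun i₁ i₂ h₁ h₂ he => hTinj i₁ h₁ i₂ h₂ he) hcard
    intro u hu
    obtain ⟨i, hi, he⟩ := this u hu
    exact ⟨i, hi, he.symm⟩
  -- unique index containing a given vertex
  have huniq : ∀ u, ∀ i ∈ O, T i = u → ∀ j : Fin 3, u ∈ D' j → j = i := by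
    intro u i hi he j hj
    by_contra hne
    exact Finset.disjoint_left.mp (hdisj' j i hne) hj (he ▸ hTD i hi)
  constructor
  · intro u hu i hui
    obtain ⟨j, hj, he⟩ := hsurj u hu
    have : i = j := huniq u j hj he i hui
    subst this
    rw [hO, Finset.mem_filter] at hj
    exact hj.2
  · intro u₁ hu₁ u₂ hu₂ i h₁ h₂
    obtain ⟨j₁, hj₁, he₁⟩ := hsurj u₁ hu₁
    obtain ⟨j₂, hj₂, he₂⟩ := hsurj u₂ hu₂
    have e1 : i = j₁ := huniq u₁ j₁ hj₁ he₁ i h₁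
    have e2 : i = j₂ := huniq u₂ j₂ hj₂ he₂ i h₂
    rw [← he₁, ← he₂, ← e1, ← e2]
end

section
/- If P = (D₁, D₂, D₃, R) is a partition of the vertex set of G and some vertex v satisfies ‖N[v] ∩ R‖ < ‖{i : v ∉ N[Dᵢ]}‖ (i.e., balance_P(v) < 0), then there is no way to assign the vertices of R to the three sets so that the resulting partition of V consists of three dominating sets extending D₁, D₂, D₃. -/
/-
Each of the disjoint dominating sets D'ᵢ of an extension meets N[v]. When v ∉ N[Dᵢ], the
vertex of D'ᵢ ∩ N[v] lies outside Dᵢ, and outside every other Dⱼ ⊆ D'ⱼ by disjointness, so it lies in R.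
These vertices are distinct for distinct i, so N[v] ∩ R has at least as many elements as there are
indices i with v ∉ N[Dᵢ].
-/

open Finset Function

namespace SimpleGraph

variable {V : Type*} [Fintype V] [DecidableEq V] (G : SimpleGraph V) [DecidableRel G.Adj]

theorem mem_closedNbhd_iff_exists_mem_insert_neighborFinset {S : Finset V} {v : V} :
    v ∈ closedNbhd G S ↔ ∃ w ∈ S, w ∈ insert v (G.neighborFinset v) := by
  simp only [closedNbhd, mem_union, mem_biUnion, mem_insert, mem_neighborFinset]
  constructor
  · rintro (hv | ⟨w, hw, hadj⟩)
    · exact ⟨v, hv, Or.inl rfl⟩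
    · exact ⟨w, hw, Or.inr hadj.symm⟩
  · rintro ⟨w, hw, rfl | hadj⟩
    · exact Or.inl hw
    · exact Or.inr ⟨w, hw, hadj.symm⟩

variable {ι : Type*} {D D' : ι → Finset V} {R : Finset V} {v : V}

theorem mem_of_mem_extension_of_not_mem_closedNbhd (hsub : ∀ i, D i ⊆ D' i)
    (hdisj : Pairwise (Disjoint on D')) (hcover : ∀ w, w ∉ R → ∃ j, w ∈ D j) {i : ι} {w : V}
    (hwD' : w ∈ D' i) (hwv : w ∈ insert v (G.neighborFinset v)) (hv : v ∉ closedNbhd G (D i)) :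
    w ∈ R := by
  by_contra hwR
  obtain ⟨j, hwD⟩ := hcover w hwR
  obtain rfl | hji := eq_or_ne j i
  · exact hv ((mem_closedNbhd_iff_exists_mem_insert_neighborFinset G).2 ⟨w, hwD, hwv⟩)
  · exact Finset.disjoint_left.1 (hdisj hji) (hsub j hwD) hwD'

/-- The inequality `balance_P(v) ≥ 0` is necessary for `P` to have an extension. -/
theorem card_filter_not_mem_closedNbhd_le [Fintype ι] (hsub : ∀ i, D i ⊆ D' i)
    (hdisj : Pairwise (Disjoint on D')) (hcover : ∀ w, w ∉ R → ∃ j, w ∈ D j)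
    (hdom : ∀ i, v ∈ closedNbhd G (D' i)) :
    (univ.filter fun i => v ∉ closedNbhd G (D i)).card
      ≤ (insert v (G.neighborFinset v) ∩ R).card := by
  choose w hwD' hwv using fun i => (mem_closedNbhd_iff_exists_mem_insert_neighborFinset G).1 (hdom i)
  refine card_le_card_of_injOn w (fun i hi => mem_inter.2 ⟨hwv i, ?_⟩) ?_
  · exact mem_of_mem_extension_of_not_mem_closedNbhd G hsub hdisj hcover (hwD' i) (hwv i)
      (mem_filter.1 hi).2
  · intro i _ j _ hij
    by_contra hne
    exact Finset.disjoint_left.1 (hdisj hne) (hwD' i) (hij ▸ hwD' j)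

end SimpleGraph

theorem negative_balance_no_extension_general {V : Type*} [Fintype V] [DecidableEq V]
    (G : SimpleGraph V) [DecidableRel G.Adj]
    (D : Fin 3 → Finset V) (R : Finset V)
    (hcover : (D 0 ∪ D 1 ∪ D 2) ∪ R = Finset.univ)
    (v : V)
    (hbal : ((insert v (G.neighborFinset v)) ∩ R).card
        < (Finset.univ.filter fun i : Fin 3 => v ∉ closedNbhd G (D i)).card) :
    ¬ ∃ D' : Fin 3 → Finset V,
        (∀ i : Fin 3, D i ⊆ D' i) ∧
        (∀ i j : Fin 3, i ≠ j → Disjoint (D' i) (D' j)) ∧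
        (D' 0 ∪ D' 1 ∪ D' 2 = Finset.univ) ∧
        (∀ i : Fin 3, closedNbhd G (D' i) = Finset.univ) := by
  rintro ⟨D', hsub, hdisj, -, hdom⟩
  have hcover' : ∀ w, w ∉ R → ∃ j, w ∈ D j := by
    intro w hwR
    have hw : w ∈ (D 0 ∪ D 1 ∪ D 2) ∪ R := hcover ▸ mem_univ w
    simp only [mem_union, hwR, or_false] at hw
    rcases hw with (h | h) | h
    exacts [⟨0, h⟩, ⟨1, h⟩, ⟨2, h⟩]
  refine hbal.not_ge (G.card_filter_not_mem_closedNbhd_le hsub hdisj hcover' fun i => ?_)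
  exact (hdom i).symm ▸ mem_univ v

theorem negative_balance_no_extension {V : Type*} [Fintype V] [DecidableEq V]
    (G : SimpleGraph V) [DecidableRel G.Adj]
    (D : Fin 3 → Finset V) (R : Finset V)
    (hdisj : ∀ i j : Fin 3, i ≠ j → Disjoint (D i) (D j))
    (hdisjR : ∀ i : Fin 3, Disjoint (D i) R)
    (hcover : (D 0 ∪ D 1 ∪ D 2) ∪ R = Finset.univ)
    (v : V)
    (hbal : ((insert v (G.neighborFinset v)) ∩ R).card
        < (Finset.univ.filter fun i : Fin 3 => v ∉ closedNbhd G (D i)).card) :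
    ¬ ∃ D' : Fin 3 → Finset V,
        (∀ i : Fin 3, D i ⊆ D' i) ∧
        (∀ i j : Fin 3, i ≠ j → Disjoint (D' i) (D' j)) ∧
        (D' 0 ∪ D' 1 ∪ D' 2 = Finset.univ) ∧
        (∀ i : Fin 3, closedNbhd G (D' i) = Finset.univ) :=
  negative_balance_no_extension_general G D R hcover v hbal
end

section
/- A connected graph G with maximum degree 2 admits a partition of its vertex set into three dominating sets if and only if G is a cycle of length k where 3 divides k. -/
/-!
In a domatic 3-colouring every vertex must see both other colours among its at most two
neighbours, so its neighbours are exactly one vertex of colour `c + 1` and one of colour `c - 1`.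
Sending each vertex to its neighbour of the next colour is therefore a permutation `σ` with
`u ~ v ↔ v = σ u ∨ u = σ v`; by connectedness `V` is a single `σ`-orbit, so `G` is a cycle, and
going once around it raises the colour by its length, which is thus divisible by 3. Conversely,
colouring `Fin k` by residues mod 3 works when `3 ∣ k`.
-/

open SimpleGraph Function Fin.CommRing

/-- `D` is a dominating set of `G`. -/
def IsDomSet {V : Type*} (G : SimpleGraph V) (D : Set V) : Prop :=
  ∀ v : V, v ∈ D ∨ ∃ u ∈ D, G.Adj u v

section

variable {V : Type*} {G : SimpleGraph V}

theorem IsDomSet.preimage_iso {W : Type*} {H : SimpleGraph W} {D : Set W} (hD : IsDomSet H D)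
    (e : G ≃g H) : IsDomSet G (e ⁻¹' D) := by
  intro v
  refine (hD (e v)).imp id fun ⟨u, hu, huv⟩ => ⟨e.symm u, by simpa using hu, ?_⟩
  rwa [← e.map_adj_iff, e.apply_symm_apply]

theorem SimpleGraph.adj_iff_eq_or_eq_of_degree_le_two {v a b : V} [Fintype (G.neighborSet v)]
    (hdeg : G.degree v ≤ 2) (ha : G.Adj v a) (hb : G.Adj v b) (hab : a ≠ b) (w : V) :
    G.Adj v w ↔ w = a ∨ w = b := by
  classical
  have hpair : {a, b} = G.neighborFinset v := by
    refine Finset.eq_of_subset_of_card_le (fun x hx => ?_) ?_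
    · rcases Finset.mem_insert.1 hx with rfl | hx
      · simpa using ha
      · simpa [Finset.mem_singleton.1 hx] using hb
    · rwa [card_neighborFinset_eq_degree, Finset.card_pair hab]
  rw [← mem_neighborFinset, ← hpair, Finset.mem_insert, Finset.mem_singleton]

theorem natCast_minimalPeriod_eq_zero {α M : Type*} [AddGroupWithOne M] {σ : α → α} {f : α → M}
    (hf : ∀ a, f (σ a) = f a + 1) (a : α) : (minimalPeriod σ a : M) = 0 := by
  have hiter : ∀ n : ℕ, f (σ^[n] a) = f a + n := by
    intro n
    induction n with
    | zero => simp
    | succ n ih => rw [iterate_succ_apply', hf, ih, Nat.cast_succ, add_assoc]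
  simpa [iterate_minimalPeriod] using hiter (minimalPeriod σ a)

theorem SimpleGraph.cycleGraph_adj_iff_eq_add_one {n : ℕ} {u v : Fin (n + 2)} :
    (cycleGraph (n + 2)).Adj u v ↔ v = u + 1 ∨ u = v + 1 := by
  rw [cycleGraph_adj, sub_eq_iff_eq_add', sub_eq_iff_eq_add', or_comm]

def SimpleGraph.cycleGraphIsoOfSucc {n : ℕ} (e : Fin (n + 2) ≃ V) (σ : V → V)
    (he : ∀ i, e (i + 1) = σ (e i)) (hσ : ∀ u v, G.Adj u v ↔ v = σ u ∨ u = σ v) :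
    cycleGraph (n + 2) ≃g G where
  toEquiv := e
  map_rel_iff' {i j} := by
    rw [hσ, ← he, ← he, e.apply_eq_iff_eq, e.apply_eq_iff_eq, cycleGraph_adj_iff_eq_add_one]

theorem SimpleGraph.Connected.sameCycle (hconn : G.Connected) {σ : Equiv.Perm V}
    (hσ : ∀ u v, G.Adj u v → σ.SameCycle u v) (u v : V) : σ.SameCycle u v := by
  induction (reachable_iff_reflTransGen u v).1 (hconn u v) with
  | refl => exact .refl σ u
  | tail _ hadj ih => exact ih.trans (hσ _ _ hadj)

theorem SimpleGraph.Connected.nonempty_iso_cycleGraph_minimalPeriod [Finite V]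
    (hconn : G.Connected) (σ : Equiv.Perm V) (hσ : ∀ u v, G.Adj u v ↔ v = σ u ∨ u = σ v)
    (v₀ : V) : Nonempty (G ≃g cycleGraph (minimalPeriod σ v₀)) := by
  have hpos : 0 < minimalPeriod σ v₀ :=
    minimalPeriod_pos_of_mem_periodicPts (σ.injective.mem_periodicPts v₀)
  have hne_one : minimalPeriod σ v₀ ≠ 1 := fun h =>
    G.irrefl ((hσ v₀ v₀).2 (.inl (minimalPeriod_eq_one_iff_isFixedPt.1 h).symm))
  obtain ⟨n, hn⟩ : ∃ n, minimalPeriod σ v₀ = n + 2 := ⟨minimalPeriod σ v₀ - 2, by omega⟩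
  let e : Fin (n + 2) → V := fun i => σ^[i] v₀
  have hinj : Injective e := fun i j hij =>
    Fin.ext (iterate_injOn_Iio_minimalPeriod (by simp [hn]) (by simp [hn]) hij)
  have hcycle : ∀ u w, G.Adj u w → σ.SameCycle u w := fun u w huw => by
    rcases (hσ u w).1 huw with rfl | rfl
    exacts [⟨1, rfl⟩, ⟨-1, by simp⟩]
  have hsurj : Surjective e := fun v => by
    obtain ⟨m, rfl⟩ := (hconn.sameCycle hcycle v₀ v).exists_nat_pow_eq
    refine ⟨⟨m % (n + 2), Nat.mod_lt _ (by omega)⟩, ?_⟩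
    simp only [e, ← hn, iterate_mod_minimalPeriod_eq, Equiv.Perm.coe_pow]
  have hsucc : ∀ i, e (i + 1) = σ (e i) := fun i => by
    simp only [e, Fin.val_add, Fin.val_one, ← hn, iterate_mod_minimalPeriod_eq,
      iterate_succ_apply']
  rw [hn]
  exact ⟨(cycleGraphIsoOfSucc (Equiv.ofBijective e ⟨hinj, hsurj⟩) σ hsucc hσ).symm⟩

theorem exists_adj_color_eq_of_isDomSet {f : V → Fin 3} (hf : ∀ i, IsDomSet G (f ⁻¹' {i}))
    (v : V) {i : Fin 3} (hi : i ≠ f v) : ∃ u, G.Adj v u ∧ f u = i := by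
  rcases hf i v with hv | ⟨u, hu, huv⟩
  · exact absurd hv.symm hi
  · exact ⟨u, huv.symm, hu⟩

section Domatic

variable [Fintype V] [DecidableRel G.Adj] {f : V → Fin 3}

theorem exists_adj_iff_of_isDomSet (hf : ∀ i, IsDomSet G (f ⁻¹' {i}))
    (hdeg : ∀ v, G.degree v ≤ 2) (v : V) :
    ∃ a b, f a = f v + 1 ∧ f b = f v - 1 ∧ ∀ w, G.Adj v w ↔ w = a ∨ w = b := by
  have hcolors : f v + 1 ≠ f v ∧ f v - 1 ≠ f v ∧ f v + 1 ≠ f v - 1 := by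
    generalize f v = c; revert c; decide
  obtain ⟨a, ha, hfa⟩ := exists_adj_color_eq_of_isDomSet hf v hcolors.1
  obtain ⟨b, hb, hfb⟩ := exists_adj_color_eq_of_isDomSet hf v hcolors.2.1
  have hab : a ≠ b := fun h => hcolors.2.2 (by rw [← hfa, ← hfb, h])
  exact ⟨a, b, hfa, hfb, adj_iff_eq_or_eq_of_degree_le_two (hdeg v) ha hb hab⟩

theorem color_ne_of_adj_of_isDomSet (hf : ∀ i, IsDomSet G (f ⁻¹' {i}))
    (hdeg : ∀ v, G.degree v ≤ 2) {v w : V} (hvw : G.Adj v w) : f w ≠ f v := by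
  obtain ⟨a, b, hfa, hfb, hadj⟩ := exists_adj_iff_of_isDomSet hf hdeg v
  rcases (hadj w).1 hvw with rfl | rfl
  · rw [hfa]; generalize f v = c; revert c; decide
  · rw [hfb]; generalize f v = c; revert c; decide

theorem eq_of_adj_of_color_eq_of_isDomSet (hf : ∀ i, IsDomSet G (f ⁻¹' {i}))
    (hdeg : ∀ v, G.degree v ≤ 2) {v u w : V} (hu : G.Adj v u) (hw : G.Adj v w)
    (huw : f u = f w) : u = w := by
  obtain ⟨a, b, hfa, hfb, hadj⟩ := exists_adj_iff_of_isDomSet hf hdeg v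
  have hab : f a ≠ f b := by rw [hfa, hfb]; generalize f v = c; revert c; decide
  rcases (hadj u).1 hu with rfl | rfl <;> rcases (hadj w).1 hw with rfl | rfl
  exacts [rfl, absurd huw hab, absurd huw.symm hab, rfl]

theorem exists_perm_adj_iff_of_isDomSet (hf : ∀ i, IsDomSet G (f ⁻¹' {i}))
    (hdeg : ∀ v, G.degree v ≤ 2) :
    ∃ σ : Equiv.Perm V, (∀ u v, G.Adj u v ↔ v = σ u ∨ u = σ v) ∧ ∀ v, f (σ v) = f v + 1 := by
  have hsucc : ∀ c : Fin 3, c + 1 ≠ c := by decide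
  choose next hadj hcolor using fun v => exists_adj_color_eq_of_isDomSet hf v (hsucc (f v))
  have hinj : Injective next := fun a b hab => by
    refine eq_of_adj_of_color_eq_of_isDomSet hf hdeg (hadj a).symm (hab ▸ (hadj b).symm) ?_
    exact add_right_cancel ((hcolor a).symm.trans (hab ▸ hcolor b))
  refine ⟨Equiv.ofBijective next (Finite.injective_iff_bijective.1 hinj), fun u v => ⟨?_, ?_⟩,
    hcolor⟩
  · intro huv
    have hne : f v ≠ f u := color_ne_of_adj_of_isDomSet hf hdeg huv
    have hcases : f v = f u + 1 ∨ f u = f v + 1 := by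
      generalize f u = c at hne; generalize f v = d at hne; revert c d; decide
    rcases hcases with h | h
    · exact .inl <| eq_of_adj_of_color_eq_of_isDomSet hf hdeg huv (hadj u) (h.trans (hcolor u).symm)
    · exact .inr <| eq_of_adj_of_color_eq_of_isDomSet hf hdeg huv.symm (hadj v)
        (h.trans (hcolor v).symm)
  · rintro (rfl | rfl)
    exacts [hadj u, (hadj v).symm]

end Domatic

theorem isDomSet_preimage_of_map_apply_eq_add_one (σ : Equiv.Perm V) (hadj : ∀ v, G.Adj v (σ v))
    {f : V → Fin 3} (hf : ∀ v, f (σ v) = f v + 1) (i : Fin 3) : IsDomSet G (f ⁻¹' {i}) := by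
  intro v
  have hcases : i = f v ∨ i = f v + 1 ∨ i + 1 = f v := by generalize f v = c; revert c i; decide
  rcases hcases with rfl | rfl | h
  · exact .inl rfl
  · exact .inr ⟨σ v, hf v, (hadj v).symm⟩
  · refine .inr ⟨σ.symm v, ?_, by simpa using hadj (σ.symm v)⟩
    have := hf (σ.symm v)
    rw [Equiv.apply_symm_apply, ← h] at this
    exact add_right_cancel this.symm

theorem isDomSet_cycleGraph_preimage_natCast_val {k : ℕ} (hk : 3 ∣ k) (i : Fin 3) :
    IsDomSet (cycleGraph k) ((fun j : Fin k => (j.val : Fin 3)) ⁻¹' {i}) := by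
  obtain rfl | ⟨n, rfl⟩ : k = 0 ∨ ∃ n, k = n + 2 := by
    rcases k with _ | _ | n
    · exact .inl rfl
    · omega
    · exact .inr ⟨n, rfl⟩
  · exact fun v => v.elim0
  refine isDomSet_preimage_of_map_apply_eq_add_one (Equiv.addRight 1)
    (fun j => cycleGraph_adj_iff_eq_add_one.2 (.inl rfl)) (fun j => Fin.ext ?_) i
  simp [Fin.val_add, Fin.val_natCast, Nat.mod_mod_of_dvd _ hk]

end

theorem maxdeg_two_three_domatic_iff_cycle_div_three_general {V : Type*} [Fintype V]
    (G : SimpleGraph V) [DecidableRel G.Adj]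
    (hconn : G.Connected) (hdeg : ∀ v : V, G.degree v ≤ 2) :
    (∃ f : V → Fin 3, ∀ i : Fin 3, IsDomSet G (f ⁻¹' {i})) ↔
      ∃ k : ℕ, 3 ∣ k ∧ Nonempty (G ≃g SimpleGraph.cycleGraph k) := by
  constructor
  · rintro ⟨f, hf⟩
    obtain ⟨σ, hσ, hcolor⟩ := exists_perm_adj_iff_of_isDomSet hf hdeg
    obtain ⟨v₀⟩ := hconn.nonempty
    exact ⟨_, Fin.natCast_eq_zero.1 (natCast_minimalPeriod_eq_zero hcolor v₀),
      hconn.nonempty_iso_cycleGraph_minimalPeriod σ hσ v₀⟩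
  · rintro ⟨k, hk, ⟨e⟩⟩
    exact ⟨fun v => ((e v).val : Fin 3),
      fun i => (isDomSet_cycleGraph_preimage_natCast_val hk i).preimage_iso e⟩

theorem maxdeg_two_three_domatic_iff_cycle_div_three {V : Type*} [Fintype V] [DecidableEq V]
    (G : SimpleGraph V) [DecidableRel G.Adj]
    (hconn : G.Connected) (hdeg : ∀ v : V, G.degree v ≤ 2) :
    (∃ f : V → Fin 3, ∀ i : Fin 3, IsDomSet G (f ⁻¹' {i})) ↔
      ∃ k : ℕ, 3 ∣ k ∧ Nonempty (G ≃g SimpleGraph.cycleGraph k) :=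
  maxdeg_two_three_domatic_iff_cycle_div_three_general G hconn hdeg
end

section
/- There exists a graph G with domatic number 3 and a minimum dominating set D of G such that D is not one of the parts in any partition of the vertex set of G into three dominating sets. Concretely, the graph G on vertices u₁,...,u₇ forming a path u₁u₂u₃u₄u₅u₆u₇ together with edges making {u₃,u₅} dominating (as in the paper's example), has γ(G) = 2, δ(G) = 3, D = {u₃, u₅} is a minimum dominating set, yet D is in no partition of V into three dominating sets (since both neighbors of u₄ lie in D). -/
/-- The domatic number: the largest `k` such that the vertex set can be
partitioned into `k` dominating sets. -/
noncomputable def domaticNumber {V : Type*} [Fintype V] (G : SimpleGraph V) : ℕ :=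
  sSup {k | ∃ f : V → Fin k, ∀ i : Fin k, IsDomSet G (f ⁻¹' {i})}

/-- The domination number: the minimum size of a dominating set. -/
noncomputable def dominationNumber {V : Type*} [Fintype V] (G : SimpleGraph V) : ℕ :=
  sInf {k | ∃ D : Finset V, IsDomSet G ↑D ∧ D.card = k}

/-!
In the example graph both neighbours of the vertex `3` (that is, `u₄`) lie in `D = {2, 4}`. In a
partition into dominating sets having `D` as a part, every other part must therefore contain `3`
itself, so there is at most one other part. Meanwhile `0` has degree `2`, which caps the domatic
number at `3`, and `![0,1,2,0,1,2,0]` attains it.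
-/

open SimpleGraph Finset

section Domination

variable {V : Type*} (G : SimpleGraph V)

instance [Fintype V] [DecidableRel G.Adj] (D : Set V) [DecidablePred (· ∈ D)] :
    Decidable (IsDomSet G D) :=
  inferInstanceAs (Decidable (∀ v, v ∈ D ∨ ∃ u ∈ D, G.Adj u v))

instance {W : Type*} [DecidableEq W] (f : V → W) (w : W) : DecidablePred (· ∈ f ⁻¹' {w}) :=
  fun v => inferInstanceAs (Decidable (f v = w))

lemma isDomSet_univ : IsDomSet G Set.univ := fun _ => Or.inl trivial

variable [Fintype V]

lemma dominationNumber_le (D : Finset V) (hD : IsDomSet G D) : dominationNumber G ≤ #D :=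
  Nat.sInf_le ⟨D, hD, rfl⟩

lemma le_dominationNumber {k : ℕ} (h : ∀ D : Finset V, IsDomSet G D → k ≤ #D) :
    k ≤ dominationNumber G :=
  le_csInf ⟨_, univ, by simpa using isDomSet_univ G, rfl⟩ <| by
    rintro _ ⟨D, hD, rfl⟩
    exact h D hD

lemma two_le_dominationNumber [Nonempty V] (h : ∀ a, ∃ v, v ≠ a ∧ ¬ G.Adj a v) :
    2 ≤ dominationNumber G := by
  refine le_dominationNumber G fun D hD => ?_
  by_contra! hcard
  have hsub : ∀ a ∈ D, ∀ b ∈ D, a = b := card_le_one.mp (Nat.lt_succ_iff.mp hcard)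
  obtain ⟨a, ha⟩ : ∃ a, a ∈ D := by
    obtain ⟨v⟩ := ‹Nonempty V›
    rcases hD v with hv | ⟨u, hu, -⟩
    exacts [⟨v, hv⟩, ⟨u, hu⟩]
  obtain ⟨v, hva, hav⟩ := h a
  rcases hD v with hv | ⟨u, hu, huv⟩
  · exact hva (hsub v hv a ha)
  · exact hav (hsub u hu a ha ▸ huv)

end Domination

section DomaticPartition

variable {V : Type*} (G : SimpleGraph V) {k : ℕ} {f : V → Fin k}

lemma card_le_degree_add_one_of_isDomSet [Fintype V] [DecidableEq V] [DecidableRel G.Adj]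
    (hf : ∀ i, IsDomSet G (f ⁻¹' {i})) (v : V) : k ≤ G.degree v + 1 := by
  have hsurj : univ ⊆ (insert v (G.neighborFinset v)).image f := by
    intro i _
    rcases hf i v with hv | ⟨u, hu, huv⟩
    · exact mem_image.mpr ⟨v, mem_insert_self _ _, hv⟩
    · exact mem_image.mpr ⟨u, mem_insert_of_mem (by simpa using huv.symm), hu⟩
  calc k = #(univ : Finset (Fin k)) := by simp
    _ ≤ #((insert v (G.neighborFinset v)).image f) := card_le_card hsurj
    _ ≤ #(insert v (G.neighborFinset v)) := card_image_le
    _ ≤ G.degree v + 1 := card_insert_le _ _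

/-- Each part must contain `v` or a neighbour of it, so all parts but `i` contain `v`. -/
lemma le_two_of_neighbors_mem_part (hf : ∀ i, IsDomSet G (f ⁻¹' {i})) {i : Fin k} {v : V}
    (hN : ∀ u, G.Adj u v → f u = i) : k ≤ 2 := by
  have hcover : univ ⊆ ({f v, i} : Finset (Fin k)) := by
    intro j _
    rcases hf j v with hj | ⟨u, hu, huv⟩
    · exact mem_insert.mpr (Or.inl (Eq.symm hj))
    · exact mem_insert_of_mem (mem_singleton.mpr (hu.symm.trans (hN u huv)))
  simpa using card_le_card hcover |>.trans (card_le_two (a := f v) (b := i))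

variable [Fintype V]

lemma domaticNumber_le_degree_add_one [DecidableEq V] [DecidableRel G.Adj] (v : V) :
    domaticNumber G ≤ G.degree v + 1 :=
  csSup_le' fun _ ⟨_, hf⟩ => card_le_degree_add_one_of_isDomSet G hf v

lemma le_domaticNumber [Nonempty V] (hf : ∀ i, IsDomSet G (f ⁻¹' {i})) :
    k ≤ domaticNumber G := by
  classical
  obtain ⟨v⟩ := ‹Nonempty V›
  exact le_csSup ⟨_, fun _ ⟨_, hg⟩ => card_le_degree_add_one_of_isDomSet G hg v⟩ ⟨f, hf⟩

end DomaticPartition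

/-- The path `u₁ ⋯ u₇` (vertices `0, …, 6`) with the chords `u₁u₃` and `u₅u₇`. -/
def exampleGraph : SimpleGraph (Fin 7) := pathGraph 7 ⊔ edge 0 2 ⊔ edge 4 6

instance : DecidableRel exampleGraph.Adj := fun a b =>
  decidable_of_iff
    (a.val + 1 = b.val ∨ b.val + 1 = a.val ∨ s(a, b) = s(0, 2) ∨ s(a, b) = s(4, 6))
    (by simp only [exampleGraph, sup_adj, pathGraph_adj, edge_adj, Sym2.eq_iff]; grind)

lemma exampleGraph_dominationNumber : dominationNumber exampleGraph = 2 :=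
  le_antisymm (dominationNumber_le _ {2, 4} (by decide))
    (two_le_dominationNumber _ (by decide))

lemma exampleGraph_domaticNumber : domaticNumber exampleGraph = 3 :=
  le_antisymm (domaticNumber_le_degree_add_one exampleGraph 0)
    (le_domaticNumber (f := ![0, 1, 2, 0, 1, 2, 0]) exampleGraph (by decide))

theorem exists_min_dominating_set_in_no_three_partition :
    ∃ (G : SimpleGraph (Fin 7)) (D : Set (Fin 7)),
      dominationNumber G = 2 ∧
      domaticNumber G = 3 ∧
      IsDomSet G D ∧
      D.ncard = dominationNumber G ∧
      ¬ ∃ f : Fin 7 → Fin 3,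
          (∀ i : Fin 3, IsDomSet G (f ⁻¹' {i})) ∧ (∃ i : Fin 3, f ⁻¹' {i} = D) := by
  refine ⟨exampleGraph, {2, 4}, exampleGraph_dominationNumber, exampleGraph_domaticNumber,
    by decide, by rw [exampleGraph_dominationNumber, Set.ncard_pair (by decide)], ?_⟩
  rintro ⟨f, hf, i, hD⟩
  have hpart : ∀ v, f v = i ↔ v = 2 ∨ v = 4 := fun v => by simpa using Set.ext_iff.mp hD v
  have hN : ∀ u, exampleGraph.Adj u 3 → f u = i := fun u hu =>
    (hpart u).mpr (by revert u; decide)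
  exact absurd (le_two_of_neighbors_mem_part exampleGraph hf hN) (by norm_num)
end
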